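/- arXiv:math/0310002 — 2 statements merged into one kernel-verified Lean document; each statement's English description precedes it below -/
import Mathlib

section
/- Let X be a compact metric space with a finite Borel measure ν, S ⊆ X a finite set, and u : X → ℝ a function satisfying u(x) ≥ A·log(dist(x,S)) − B for some constants A, B > 0 and all x ∈ X, and u ≤ 0. If there exist constants C, such that ν(B(S,r)) ≤ C·r² for all r ≥ 0 (where B(S,r) is the r-neighborhood of S), then |u| is ν-integrable. -/
/-!
Since `u ≥ A log dist(·, S) - B`, the set where `|u| > t` lies in the `exp ((B - t) / A)`-
neighbourhood of `S`, of measure at most `C exp (2 (B - t) / A)`. These superlevel sets decay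
exponentially in `t`, so the layer-cake formula makes `∫ |u|` finite. If `S = ∅`, then
`infDist x S = 0` and `log 0 = 0`, so `u` is simply bounded below by `-B`.
-/

open MeasureTheory Metric Set

theorem integrable_of_measure_lt_le_exp {α : Type*} [MeasurableSpace α] {μ : Measure α}
    {f : α → ℝ} (hf_nonneg : 0 ≤ f) (hf : AEMeasurable f μ) {K c : ℝ} (hc : 0 < c)
    (h : ∀ t > 0, μ {x | t < f x} ≤ ENNReal.ofReal (K * Real.exp (-c * t))) :
    Integrable f μ := by
  refine ⟨hf.aestronglyMeasurable, ?_⟩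
  have hf_nonneg' : 0 ≤ᵐ[μ] f := ae_of_all _ hf_nonneg
  rw [hasFiniteIntegral_iff_ofReal hf_nonneg', lintegral_eq_lintegral_meas_lt μ hf_nonneg' hf]
  calc ∫⁻ t in Ioi 0, μ {x | t < f x}
      ≤ ∫⁻ t in Ioi 0, ENNReal.ofReal (K * Real.exp (-c * t)) :=
        setLIntegral_mono' measurableSet_Ioi h
    _ < ⊤ := IntegrableOn.setLIntegral_lt_top ((exp_neg_integrableOn_Ioi 0 hc).const_mul K)

section LogLowerBound

variable {X : Type*} [MetricSpace X] {S : Set X} {u : X → ℝ} {A B : ℝ}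

theorem setOf_lt_subset_thickening_of_log_infDist_le (hS : S.Nonempty) (hA : 0 < A)
    (hlow : ∀ x, A * Real.log (infDist x S) - B ≤ u x) (s : ℝ) :
    {x | u x < s} ⊆ thickening (Real.exp ((s + B) / A)) S := by
  intro x hx
  rw [mem_thickening_iff_infDist_lt hS]
  rcases (infDist_nonneg (x := x) (s := S)).eq_or_lt with h | h
  · rw [← h]
    exact Real.exp_pos _
  · rw [← Real.log_lt_iff_lt_exp h, lt_div_iff₀ hA]
    linarith [hlow x, show u x < s from hx]

theorem measure_setOf_lt_le_exp [MeasurableSpace X] {ν : Measure X} {C : ℝ} (hS : S.Nonempty)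
    (hA : 0 < A) (hlow : ∀ x, A * Real.log (infDist x S) - B ≤ u x)
    (hC : ∀ r : ℝ, 0 ≤ r → ν (thickening r S) ≤ ENNReal.ofReal (C * r ^ 2)) (t : ℝ) :
    ν {x | u x < -t} ≤ ENNReal.ofReal (C * Real.exp (2 * B / A) * Real.exp (-(2 / A) * t)) := by
  have hexp : Real.exp ((-t + B) / A) ^ 2 = Real.exp (2 * B / A) * Real.exp (-(2 / A) * t) := by
    rw [← Real.exp_nat_mul, ← Real.exp_add]
    congr 1
    field_simp
    ring
  calc ν {x | u x < -t} ≤ ν (thickening (Real.exp ((-t + B) / A)) S) :=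
        measure_mono (setOf_lt_subset_thickening_of_log_infDist_le hS hA hlow (-t))
    _ ≤ ENNReal.ofReal (C * Real.exp ((-t + B) / A) ^ 2) := hC _ (Real.exp_pos _).le
    _ = _ := by rw [hexp, mul_assoc]

end LogLowerBound

theorem stmt0_general {X : Type*} [MetricSpace X] [MeasurableSpace X]
    (ν : Measure X) [IsFiniteMeasure ν] (S : Set X)
    (u : X → ℝ) (hu : Measurable u)
    (A B : ℝ) (hA : 0 < A)
    (hlow : ∀ x, A * Real.log (Metric.infDist x S) - B ≤ u x)
    (hneg : ∀ x, u x ≤ 0)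
    (C : ℝ)
    (hC : ∀ r : ℝ, 0 ≤ r → ν (Metric.thickening r S) ≤ ENNReal.ofReal (C * r ^ 2)) :
    Integrable (fun x => |u x|) ν := by
  have habs : ∀ x, |u x| = -u x := fun x => abs_of_nonpos (hneg x)
  rcases S.eq_empty_or_nonempty with rfl | hS
  · have hbound : ∀ x, ‖|u x|‖ ≤ B := fun x => by
      have hlow_x := hlow x
      simp only [infDist_empty, Real.log_zero, mul_zero, zero_sub] at hlow_x
      rw [Real.norm_eq_abs, abs_abs, habs]
      linarith
    exact (integrable_const B).mono' hu.abs.aestronglyMeasurable (ae_of_all _ hbound)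
  · refine integrable_of_measure_lt_le_exp (K := C * Real.exp (2 * B / A))
      (fun x => abs_nonneg (u x)) hu.abs.aemeasurable (by positivity : (0 : ℝ) < 2 / A)
      fun t _ => ?_
    simp only [habs, lt_neg]
    exact measure_setOf_lt_le_exp hS hA hlow hC t

theorem stmt0 {X : Type*} [MetricSpace X] [CompactSpace X] [MeasurableSpace X] [BorelSpace X]
    (ν : Measure X) [IsFiniteMeasure ν] (S : Set X) (hS : S.Finite)
    (u : X → ℝ) (hu : Measurable u)
    (A B : ℝ) (hA : 0 < A) (hB : 0 < B)
    (hlow : ∀ x, A * Real.log (Metric.infDist x S) - B ≤ u x)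
    (hneg : ∀ x, u x ≤ 0)
    (C : ℝ)
    (hC : ∀ r : ℝ, 0 ≤ r → ν (Metric.thickening r S) ≤ ENNReal.ofReal (C * r ^ 2)) :
    Integrable (fun x => |u x|) ν :=
  stmt0_general ν S u hu A B hA hlow hneg C hC
end

section
/- Let H be a real inner product space with inner product E(·,·) and seminorm |u| = E(u,u)^{1/2}. Suppose (uⱼ) is a sequence in H such that for all k ≥ j: E(uⱼ,uⱼ) ≤ E(uⱼ,u_k) + εⱼₖ and E(uⱼ,u_k) ≤ E(u_k,u_k) + εⱼₖ, where εⱼₖ → 0 as j,k → ∞, and suppose (|uⱼ|) is bounded. Then (uⱼ) is a Cauchy sequence in the seminorm |·|. -/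
/-! The energies `a j = E (u j) (u j)` are essentially increasing and bounded, hence convergent.
For `j ≤ k` the first hypothesis gives
`E (u j - u k) (u j - u k) = a j + a k - 2 E (u j) (u k) ≤ a k - a j + 2 ε j k`,
and the right-hand side tends to `0`. -/

open Filter Topology

theorem tendsto_prodSwap_atTop {α : Type*} [Preorder α] :
    Tendsto (Prod.swap : α × α → α × α) atTop atTop := by
  rw [← prod_atTop_atTop_eq]
  exact tendsto_snd.prodMk tendsto_fst

theorem cauchySeq_of_le_add_of_bddAbove {a : ℕ → ℝ} {δ : ℕ → ℕ → ℝ}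
    (hδ : Tendsto (fun p : ℕ × ℕ => δ p.1 p.2) atTop (𝓝 0))
    (hle : ∀ j k, j ≤ k → a j ≤ a k + δ j k) (hbdd : BddAbove (Set.range a)) :
    CauchySeq a := by
  rw [Metric.cauchySeq_iff']
  intro η hη
  obtain ⟨⟨n₁, n₂⟩, hsmall⟩ := eventually_atTop.1 (hδ.eventually (gt_mem_nhds hη))
  set N₀ := max n₁ n₂
  have htail_bdd : BddAbove (Set.range fun n => a (N₀ + n)) :=
    hbdd.mono (Set.range_comp_subset_range _ a)
  -- `N₀ + i` nearly attains the supremum of the tail, and no later term can drop much below it.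
  obtain ⟨i, hi⟩ := exists_lt_of_lt_ciSup (sub_lt_self (⨆ n, a (N₀ + n)) hη)
  refine ⟨N₀ + i, fun n hn => ?_⟩
  have hupper : a n ≤ ⨆ m, a (N₀ + m) := by
    obtain ⟨m, rfl⟩ := Nat.exists_eq_add_of_le (le_trans (Nat.le_add_right N₀ i) hn)
    exact le_ciSup htail_bdd m
  have hδη : δ (N₀ + i) n < η :=
    hsmall (N₀ + i, n) ⟨by omega, by omega⟩
  have hlower := hle (N₀ + i) n hn
  rw [Real.dist_eq, abs_sub_lt_iff]
  constructor <;> linarith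

theorem tendsto_sqrt_of_symm_of_le {Q g : ℕ → ℕ → ℝ} (hQ : ∀ j k, Q j k = Q k j)
    (hle : ∀ j k, j ≤ k → Q j k ≤ g j k)
    (hg : Tendsto (fun p : ℕ × ℕ => g p.1 p.2) atTop (𝓝 0)) :
    Tendsto (fun p : ℕ × ℕ => Real.sqrt (Q p.1 p.2)) atTop (𝓝 0) := by
  have hmax : Tendsto (fun p : ℕ × ℕ => max (g p.1 p.2) (g p.2 p.1)) atTop (𝓝 0) := by
    simpa using hg.max (hg.comp tendsto_prodSwap_atTop)
  have hQmax : ∀ j k, Q j k ≤ max (g j k) (g k j) := by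
    intro j k
    rcases le_total j k with hjk | hkj
    · exact le_max_of_le_left (hle j k hjk)
    · exact le_max_of_le_right (hQ j k ▸ hle k j hkj)
  have hsqrt := (Real.continuous_sqrt.tendsto' 0 0 Real.sqrt_zero).comp hmax
  exact tendsto_of_tendsto_of_tendsto_of_le_of_le tendsto_const_nhds hsqrt
    (fun _ => Real.sqrt_nonneg _) (fun p => Real.sqrt_le_sqrt (hQmax p.1 p.2))

theorem stmt6_general {H : Type*} [AddCommGroup H] [Module ℝ H]
    (E : H →ₗ[ℝ] H →ₗ[ℝ] ℝ)
    (hsymm : ∀ u v, E u v = E v u)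
    (u : ℕ → H) (ε : ℕ → ℕ → ℝ)
    (hε : Tendsto (fun p : ℕ × ℕ => ε p.1 p.2) atTop (nhds 0))
    (h1 : ∀ j k, j ≤ k → E (u j) (u j) ≤ E (u j) (u k) + ε j k)
    (h2 : ∀ j k, j ≤ k → E (u j) (u k) ≤ E (u k) (u k) + ε j k)
    (M : ℝ) (hM : ∀ j, Real.sqrt (E (u j) (u j)) ≤ M) :
    Tendsto (fun p : ℕ × ℕ => Real.sqrt (E (u p.1 - u p.2) (u p.1 - u p.2)))
      atTop (nhds 0) := by
  set a : ℕ → ℝ := fun j => E (u j) (u j)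
  have hbdd : BddAbove (Set.range a) :=
    ⟨M ^ 2, Set.forall_mem_range.2 fun j => (Real.sqrt_le_iff.1 (hM j)).2⟩
  obtain ⟨L, hL⟩ := cauchySeq_tendsto_of_complete <|
    cauchySeq_of_le_add_of_bddAbove (δ := fun j k => 2 * ε j k)
      (by simpa using hε.const_mul 2) (fun j k hjk => by linarith [h1 j k hjk, h2 j k hjk]) hbdd
  have ha_diff : Tendsto (fun p : ℕ × ℕ => a p.2 - a p.1) atTop (𝓝 0) := by
    rw [← prod_atTop_atTop_eq]
    simpa using (hL.comp tendsto_snd).sub (hL.comp tendsto_fst)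
  have hexpand : ∀ j k, E (u j - u k) (u j - u k) = a j + a k - 2 * E (u j) (u k) := by
    intro j k
    simp only [a, map_sub, LinearMap.sub_apply, hsymm (u k) (u j)]
    ring
  refine tendsto_sqrt_of_symm_of_le (Q := fun j k => E (u j - u k) (u j - u k))
    (g := fun j k => a k - a j + 2 * ε j k) ?_ ?_ ?_
  · intro j k
    rw [hexpand, hexpand, hsymm (u k)]
    ring
  · intro j k hjk
    rw [hexpand]
    linarith [h1 j k hjk]
  · simpa using ha_diff.add (hε.const_mul 2)

theorem stmt6 {H : Type*} [AddCommGroup H] [Module ℝ H]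
    (E : H →ₗ[ℝ] H →ₗ[ℝ] ℝ)
    (hsymm : ∀ u v, E u v = E v u) (hpsd : ∀ u, 0 ≤ E u u)
    (u : ℕ → H) (ε : ℕ → ℕ → ℝ)
    (hε : Tendsto (fun p : ℕ × ℕ => ε p.1 p.2) atTop (nhds 0))
    (h1 : ∀ j k, j ≤ k → E (u j) (u j) ≤ E (u j) (u k) + ε j k)
    (h2 : ∀ j k, j ≤ k → E (u j) (u k) ≤ E (u k) (u k) + ε j k)
    (M : ℝ) (hM : ∀ j, Real.sqrt (E (u j) (u j)) ≤ M) :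
    Tendsto (fun p : ℕ × ℕ => Real.sqrt (E (u p.1 - u p.2) (u p.1 - u p.2)))
      atTop (nhds 0) :=
  stmt6_general E hsymm u ε hε h1 h2 M hM
end
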